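/- Let ρ be a nonnegative initial mass configuration on ℤ² with finite total mass and bounded support, and let T₁ and T₂ be two legal toppling schemes for ρ, with limiting configurations ν^{T₁}, ν^{T₂} and limiting emitted-mass functions u^{T₁}, u^{T₂}. Then ν^{T₁} = ν^{T₂} and u^{T₁} = u^{T₂} (the divisible sandpile is Abelian). -/

import Mathlib

open MeasureTheory Filter Metric Real
open scoped Topology ENNReal

noncomputable section

namespace TruncatedSandpile

/-- The plane `ℝ²` with the Euclidean norm. -/
abbrev R2 : Type := EuclideanSpace ℝ (Fin 2)

/-- The Euclidean inner product `θ · x` on `ℝ²`. -/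
def dotp (θ x : R2) : ℝ := @inner ℝ _ _ θ x

/-- The point of the rescaled lattice `(1/n)ℤ²` corresponding to `z ∈ ℤ²`. -/
def pt (n : ℕ) (z : ℤ × ℤ) : R2 :=
  (WithLp.equiv 2 (Fin 2 → ℝ)).symm ![(z.1 : ℝ) / n, (z.2 : ℝ) / n]

/-- The square `y + [-1/(2n), 1/(2n)]²`. -/
def latSq (n : ℕ) (y : R2) : Set R2 :=
  {x : R2 | ∀ i : Fin 2, |x i - y i| ≤ 1 / (2 * (n : ℝ))}

/-- `F_n(y) = n² · μ(y^□ ∩ (B_M \ B_{r/n}))`. -/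
def Fn (r M : ℝ) (n : ℕ) (y : R2) : ℝ :=
  (n : ℝ) ^ 2 * (volume (latSq n y ∩ (ball (0 : R2) M \ ball 0 (r / n)))).toReal

/-- The constant `k_n`. -/
def kn (α r M : ℝ) (n : ℕ) : ℝ :=
  (n : ℝ) ^ (2 - α) / 4 *
    ((∫ y in ball (0 : R2) M, ‖y‖ ^ (-α)) -
      ((n : ℝ) ^ 2)⁻¹ * ∑' z : ℤ × ℤ, if z ≠ 0 then Fn r M n (pt n z) / ‖pt n z‖ ^ α else 0)

/-- The unnormalized jump weights defining `p_n`. -/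
def pnRaw (α r M : ℝ) (n : ℕ) (z : ℤ × ℤ) : ℝ :=
  if z = 0 then 0 else
    kn α r M n * (if ‖pt n z‖ = 1 / n then 1 else 0) +
      Fn r M n (pt n z) / ((n : ℝ) ^ (2 + α) * ‖pt n z‖ ^ (2 + α))

/-- The normalizing constant `c_n`, making `p_n` a probability. -/
def cseq (α r M : ℝ) (n : ℕ) : ℝ := (∑' z : ℤ × ℤ, pnRaw α r M n z)⁻¹

/-- The jump probability `p_n` on `(1/n)ℤ²` (indexed by `ℤ²`). -/
def pn (α r M : ℝ) (n : ℕ) (z : ℤ × ℤ) : ℝ := cseq α r M n * pnRaw α r M n z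

/-- `c = lim_{n→∞} c_n`. -/
def climit (α r M : ℝ) : ℝ := limUnder atTop (cseq α r M)

/-- `ψ_M(θ) = cc ∫_{B_M} (1 - cos(θ·y))/|y|^{2+α} dy`. -/
def psiM (α M cc : ℝ) (θ : R2) : ℝ :=
  cc * ∫ y in ball (0 : R2) M, (1 - Real.cos (dotp θ y)) / ‖y‖ ^ (2 + α)

/-- `ψ_{M,n}(θ) = n^α Σ_y p_n(y)(1 - cos(θ·y))`. -/
def psiMn (α r M : ℝ) (n : ℕ) (θ : R2) : ℝ :=
  (n : ℝ) ^ α * ∑' z : ℤ × ℤ, pn α r M n z * (1 - Real.cos (dotp θ (pt n z)))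

/-- The continuous Green's function `G_M` (with constant `cc` and base point `x₀`). -/
def GM (α M cc : ℝ) (x₀ x : R2) : ℝ :=
  (1 / (2 * π) ^ 2) *
    ∫ θ : R2, (Real.cos (dotp θ x) - Real.cos (dotp θ x₀)) / psiM α M cc θ

/-- The box `[-nπ, nπ]²`. -/
def box (n : ℕ) : Set R2 := {θ : R2 | ∀ i : Fin 2, |θ i| ≤ (n : ℝ) * π}

/-- The rescaled discrete Green's function `G_{M,n}`. -/
def GMn (α r M : ℝ) (n : ℕ) (x₀ x : R2) : ℝ :=
  (1 / (2 * π) ^ 2) *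
    ∫ θ in box n, (Real.cos (dotp θ x) - Real.cos (dotp θ x₀)) / psiMn α r M n θ

/-- `σ_M² = cc ∫_{B_M} |y|^{-α} dy`. -/
def sigmaM2 (α M cc : ℝ) : ℝ := cc * ∫ y in ball (0 : R2) M, ‖y‖ ^ (-α)

/-- `σ_{M,n}² = n^α Σ_y p_n(y)|y|²`. -/
def sigmaMn2 (α r M : ℝ) (n : ℕ) : ℝ :=
  (n : ℝ) ^ α * ∑' z : ℤ × ℤ, pn α r M n z * ‖pt n z‖ ^ 2

/-- The truncated fractional Laplacian `L_M` (with constant `cc`). -/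
def LM (α M cc : ℝ) (f : R2 → ℝ) (x : R2) : ℝ :=
  cc / 2 * ∫ y in ball (0 : R2) M, (f (x + y) + f (x - y) - 2 * f x) / ‖y‖ ^ (2 + α)

/-- The discrete operator `L_{M,n}` acting on lattice functions `g : ℤ² → ℝ`. -/
def LMnD (α r M : ℝ) (n : ℕ) (g : ℤ × ℤ → ℝ) (z : ℤ × ℤ) : ℝ :=
  (n : ℝ) ^ α * ∑' w : ℤ × ℤ, pn α r M n w * (g (z + w) - g z)

/-- The discrete operator `L_{M,n}` acting on functions on `ℝ²`. -/
def LMnF (α r M : ℝ) (n : ℕ) (f : R2 → ℝ) (x : R2) : ℝ :=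
  (n : ℝ) ^ α * ∑' w : ℤ × ℤ, pn α r M n w * (f (x + pt n w) - f x)

/-- The continuous obstacle `γ`. -/
def gammaC (α M cc : ℝ) (x₀ : R2) (ρ : R2 → ℝ) (x : R2) : ℝ :=
  -‖x‖ ^ 2 / sigmaM2 α M cc - ∫ y : R2, GM α M cc x₀ (x - y) * ρ y

/-- The discrete obstacle `γ_n` (as a function on `ℤ²`, representing `(1/n)ℤ²`). -/
def gammaD (α r M : ℝ) (n : ℕ) (x₀ : R2) (ρ : R2 → ℝ) (z : ℤ × ℤ) : ℝ :=
  -‖pt n z‖ ^ 2 / sigmaMn2 α r M n -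
    ((n : ℝ) ^ 2)⁻¹ * ∑' w : ℤ × ℤ, GMn α r M n x₀ (pt n z - pt n w) * ρ (pt n w)

/-- `f ∈ L¹_loc` is superharmonic w.r.t. `L_M` on an open set `Ω` if
`∫ f · L_M φ ≤ 0` for all nonnegative smooth compactly supported `φ` with support in `Ω`. -/
def Superharmonic (α M cc : ℝ) (f : R2 → ℝ) (Ω : Set R2) : Prop :=
  ∀ φ : R2 → ℝ, ContDiff ℝ (⊤ : ℕ∞) φ → HasCompactSupport φ → (∀ x, 0 ≤ φ x) →
    tsupport φ ⊆ Ω → (∫ x : R2, f x * LM α M cc φ x) ≤ 0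

/-- The least superharmonic majorant `s` of the continuous obstacle. -/
def sMaj (α M cc : ℝ) (x₀ : R2) (ρ : R2 → ℝ) (x : R2) : ℝ :=
  sInf {v : ℝ | ∃ f : R2 → ℝ, Continuous f ∧ Superharmonic α M cc f Set.univ ∧
    (∀ y, gammaC α M cc x₀ ρ y ≤ f y) ∧ v = f x}

/-- The discrete majorant `s_n` of the discrete obstacle. -/
def sMajD (α r M : ℝ) (n : ℕ) (x₀ : R2) (ρ : R2 → ℝ) (z : ℤ × ℤ) : ℝ :=
  sInf {v : ℝ | ∃ f : ℤ × ℤ → ℝ, (∀ w, LMnD α r M n f w ≤ 0) ∧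
    (∀ w, gammaD α r M n x₀ ρ w ≤ f w) ∧ v = f z}

/-- The discrete odometer `u_n = s_n - γ_n`. -/
def uD (α r M : ℝ) (n : ℕ) (x₀ : R2) (ρ : R2 → ℝ) (z : ℤ × ℤ) : ℝ :=
  sMajD α r M n x₀ ρ z - gammaD α r M n x₀ ρ z

/-- The discrete final distribution `ν_n = ρ_n + L_{M,n} u_n`. -/
def nuD (α r M : ℝ) (n : ℕ) (x₀ : R2) (ρ : R2 → ℝ) (z : ℤ × ℤ) : ℝ :=
  ρ (pt n z) + LMnD α r M n (uD α r M n x₀ ρ) z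

/-- The lattice point `x^{::}` of `(1/n)ℤ²` whose half-open square
`(x^{::} - 1/(2n), x^{::} + 1/(2n)]²` contains `x` (ties broken to the right). -/
def nearPt (n : ℕ) (x : R2) : ℤ × ℤ := (⌈(n : ℝ) * x 0 - 1 / 2⌉, ⌈(n : ℝ) * x 1 - 1 / 2⌉)

/-- The extension `g^□` of a lattice function `g` to `ℝ²`: `g^□(x) = g(x^{::})`. -/
def extQ (n : ℕ) (g : ℤ × ℤ → ℝ) (x : R2) : ℝ := g (nearPt n x)

/-- The constant `β_n = (2/(π σ_M²))(c/c_n - 1)`. -/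
def betan (α r M : ℝ) (n : ℕ) : ℝ :=
  2 / (π * sigmaM2 α M (climit α r M)) * (climit α r M / cseq α r M n - 1)

/-- The auxiliary function `h_M(x) = (1/(π²σ_M²)) ∫_{B_{|x|/M} \ B₁} cos(θ·ω)/|θ|² dθ`. -/
def hM (α M cc : ℝ) (ω x : R2) : ℝ :=
  1 / (π ^ 2 * sigmaM2 α M cc) *
    ∫ θ in ball (0 : R2) (‖x‖ / M) \ ball 0 1, Real.cos (dotp θ ω) / ‖θ‖ ^ 2

/-- Toppling the (full) site `x`: `x` keeps mass 1 and distributes the excess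
according to `p₁`. -/
def topple (α r M : ℝ) (m : ℤ × ℤ → ℝ) (x : ℤ × ℤ) : ℤ × ℤ → ℝ :=
  fun y => if y = x then 1 else m y + (m x - 1) * pn α r M 1 (y - x)

/-- The mass configuration after the first `k` topplings of the scheme `T`,
started from `ρ`. -/
def conf (α r M : ℝ) (ρ : ℤ × ℤ → ℝ) (T : ℕ → ℤ × ℤ) : ℕ → ℤ × ℤ → ℝ
  | 0 => ρ
  | k + 1 => topple α r M (conf α r M ρ T k) (T k)

/-- The total mass emitted from each site during the first `k` topplings. -/
def emitted (α r M : ℝ) (ρ : ℤ × ℤ → ℝ) (T : ℕ → ℤ × ℤ) : ℕ → ℤ × ℤ → ℝ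
  | 0 => fun _ => 0
  | k + 1 => fun y =>
      emitted α r M ρ T k y + if y = T k then conf α r M ρ T k y - 1 else 0

/-- A legal toppling scheme: only full sites are toppled, and every site that is
full at some stage is toppled infinitely often afterwards. -/
def LegalScheme (α r M : ℝ) (ρ : ℤ × ℤ → ℝ) (T : ℕ → ℤ × ℤ) : Prop :=
  (∀ k, 1 ≤ conf α r M ρ T k (T k)) ∧
  (∀ k x, 1 ≤ conf α r M ρ T k x → ∀ N, ∃ j, N ≤ j ∧ T j = x)

/-!
Along any toppling scheme, the mass emitted so far from a site stays below the limiting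
odometer `u'` of a legal scheme: when `T k` topples, what it has received is at most what `u'`
delivers to it (as `p₁ ≥ 0`), and it keeps mass `1 ≥ ν' (T k)`. Hence `u₁ ≤ u₂ ≤ u₁`.
Passing to the limit in the mass-balance identity (monotone convergence) gives `ν = ρ + Δu`,
so the limiting configurations agree as well.
-/

theorem hasSum_of_monotone_of_tendsto {ι : Type*} {f : ℕ → ι → ℝ} {g : ι → ℝ} {S : ℝ}
    (hf0 : 0 ≤ f 0) (hmono : Monotone f) (hsum : ∀ k, Summable (f k))
    (hg : ∀ i, Tendsto (fun k => f k i) atTop (𝓝 (g i)))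
    (hS : Tendsto (fun k => ∑' i, f k i) atTop (𝓝 S)) :
    HasSum g S := by
  have hf_nonneg : ∀ k, 0 ≤ f k := fun k => hf0.trans (hmono k.zero_le)
  have hf_le_g : ∀ k, f k ≤ g := fun k i =>
    (monotone_nat_of_le_succ fun j => hmono j.le_succ i).ge_of_tendsto (hg i) k
  have hg0 : 0 ≤ g := (hf_nonneg 0).trans (hf_le_g 0)
  have htsum_le : ∀ k, ∑' i, f k i ≤ S :=
    (monotone_nat_of_le_succ fun k =>
      (hsum k).tsum_le_tsum (hmono k.le_succ) (hsum _)).ge_of_tendsto hS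
  have hfinset_le : ∀ s : Finset ι, ∑ i ∈ s, g i ≤ S := fun s =>
    le_of_tendsto (tendsto_finsetSum s fun i _ => hg i) <| Eventually.of_forall fun k =>
      ((hsum k).sum_le_tsum s fun i _ => hf_nonneg k i).trans (htsum_le k)
  have hg_sum : Summable g := summable_of_sum_le hg0 hfinset_le
  refine hg_sum.hasSum_iff.2 (le_antisymm (Real.tsum_le_of_sum_le hg0 hfinset_le) ?_)
  exact le_of_tendsto' hS fun k => (hsum k).tsum_le_tsum (hf_le_g k) hg_sum

section Toppling

variable {α r M : ℝ} {ρ : ℤ × ℤ → ℝ}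

theorem pn_zero (n : ℕ) : pn α r M n 0 = 0 := by
  simp [pn, pnRaw]

theorem pn_nonneg {n : ℕ} (hk : 0 ≤ kn α r M n) (z : ℤ × ℤ) : 0 ≤ pn α r M n z := by
  have hraw : ∀ z, 0 ≤ pnRaw α r M n z := by
    intro z
    unfold pnRaw
    split_ifs
    · exact le_rfl
    all_goals
      exact add_nonneg (by simp [hk]) (div_nonneg (by unfold Fn; positivity) (by positivity))
  exact mul_nonneg (inv_nonneg.2 (tsum_nonneg hraw)) (hraw z)

theorem hasSum_emitted_mul_pn (T : ℕ → ℤ × ℤ) (k : ℕ) (y : ℤ × ℤ) :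
    HasSum (fun w => emitted α r M ρ T k w * pn α r M 1 (y - w))
      (conf α r M ρ T k y - ρ y + emitted α r M ρ T k y) := by
  induction k with
  | zero => simp [conf, emitted]
  | succ k ih =>
    convert ih.add (hasSum_ite_eq (T k) ((conf α r M ρ T k (T k) - 1) * pn α r M 1 (y - T k)))
      using 1
    · funext w
      by_cases hw : w = T k <;> simp [emitted, hw, add_mul]
    · by_cases hy : y = T k
      · subst hy
        simp only [conf, topple, ↓reduceIte, emitted, sub_self, pn_zero, mul_zero, add_zero]
        ring
      · simp only [conf, topple, hy, ↓reduceIte, emitted, add_zero]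
        ring

theorem emitted_monotone {T : ℕ → ℤ × ℤ} (hfull : ∀ k, 1 ≤ conf α r M ρ T k (T k))
    (w : ℤ × ℤ) : Monotone fun k => emitted α r M ρ T k w := by
  refine monotone_nat_of_le_succ fun k => ?_
  by_cases hw : w = T k
  · subst hw
    simpa [emitted] using hfull k
  · simp [emitted, hw]

theorem conf_limit_le_one {T : ℕ → ℤ × ℤ} (hT : LegalScheme α r M ρ T) {ν : ℤ × ℤ → ℝ}
    (hν : ∀ x, Tendsto (fun k => conf α r M ρ T k x) atTop (𝓝 (ν x))) (y : ℤ × ℤ) :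
    ν y ≤ 1 := by
  by_contra! h
  obtain ⟨K, hK⟩ := eventually_atTop.1 ((hν y).eventually (eventually_gt_nhds h))
  obtain ⟨j, hKj, rfl⟩ := hT.2 K _ (hK K le_rfl).le K
  have htoppled : conf α r M ρ T (j + 1) (T j) = 1 := by simp [conf, topple]
  exact (hK (j + 1) (by omega)).ne' htoppled

/-- `ν = ρ + Δu`, where `Δ` is the generator of the random walk with steps `p₁`. -/
theorem hasSum_odometer (hp : ∀ z, 0 ≤ pn α r M 1 z) {T : ℕ → ℤ × ℤ}
    (hT : LegalScheme α r M ρ T) {ν u : ℤ × ℤ → ℝ}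
    (hν : ∀ x, Tendsto (fun k => conf α r M ρ T k x) atTop (𝓝 (ν x)))
    (hu : ∀ x, Tendsto (fun k => emitted α r M ρ T k x) atTop (𝓝 (u x))) (y : ℤ × ℤ) :
    HasSum (fun w => u w * pn α r M 1 (y - w)) (ν y - ρ y + u y) := by
  refine hasSum_of_monotone_of_tendsto (fun w => by simp [emitted]) ?_
    (fun k => (hasSum_emitted_mul_pn T k y).summable) (fun w => (hu w).mul_const _) ?_
  · exact fun a b hab w => mul_le_mul_of_nonneg_right (emitted_monotone hT.1 w hab) (hp _)
  · simp_rw [(hasSum_emitted_mul_pn T _ y).tsum_eq]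
    exact ((hν y).sub_const _).add (hu y)

theorem emitted_le_odometer (hp : ∀ z, 0 ≤ pn α r M 1 z) (T T' : ℕ → ℤ × ℤ)
    (hT' : LegalScheme α r M ρ T') {ν' u' : ℤ × ℤ → ℝ}
    (hν' : ∀ x, Tendsto (fun k => conf α r M ρ T' k x) atTop (𝓝 (ν' x)))
    (hu' : ∀ x, Tendsto (fun k => emitted α r M ρ T' k x) atTop (𝓝 (u' x)))
    (k : ℕ) (x : ℤ × ℤ) : emitted α r M ρ T k x ≤ u' x := by
  induction k generalizing x with
  | zero => exact (emitted_monotone hT'.1 x).ge_of_tendsto (hu' x) 0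
  | succ k ih =>
    by_cases hx : x = T k
    · subst hx
      have hreceived : conf α r M ρ T k (T k) - ρ (T k) + emitted α r M ρ T k (T k)
          ≤ ν' (T k) - ρ (T k) + u' (T k) :=
        hasSum_le (fun w => mul_le_mul_of_nonneg_right (ih w) (hp _))
          (hasSum_emitted_mul_pn T k _) (hasSum_odometer hp hT' hν' hu' _)
      have := conf_limit_le_one hT' hν' (T k)
      simp only [emitted, if_pos]
      linarith
    · simpa [emitted, hx] using ih x

end Toppling

theorem sandpile_abelian_general
    (α r M : ℝ)
    (hk : 0 < kn α r M 1)
    (ρ : ℤ × ℤ → ℝ)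
    (T₁ T₂ : ℕ → ℤ × ℤ) (hT₁ : LegalScheme α r M ρ T₁) (hT₂ : LegalScheme α r M ρ T₂)
    (ν₁ u₁ ν₂ u₂ : ℤ × ℤ → ℝ)
    (hν₁ : ∀ x, Tendsto (fun k => conf α r M ρ T₁ k x) atTop (𝓝 (ν₁ x)))
    (hu₁ : ∀ x, Tendsto (fun k => emitted α r M ρ T₁ k x) atTop (𝓝 (u₁ x)))
    (hν₂ : ∀ x, Tendsto (fun k => conf α r M ρ T₂ k x) atTop (𝓝 (ν₂ x)))
    (hu₂ : ∀ x, Tendsto (fun k => emitted α r M ρ T₂ k x) atTop (𝓝 (u₂ x))) :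
    ν₁ = ν₂ ∧ u₁ = u₂ := by
  have hp : ∀ z, 0 ≤ pn α r M 1 z := pn_nonneg hk.le
  have hu : u₁ = u₂ := funext fun x => le_antisymm
    (le_of_tendsto' (hu₁ x) fun k => emitted_le_odometer hp T₁ T₂ hT₂ hν₂ hu₂ k x)
    (le_of_tendsto' (hu₂ x) fun k => emitted_le_odometer hp T₂ T₁ hT₁ hν₁ hu₁ k x)
  refine ⟨funext fun y => ?_, hu⟩
  have h₁ := hasSum_odometer hp hT₁ hν₁ hu₁ y
  have h₂ := hasSum_odometer hp hT₂ hν₂ hu₂ y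
  rw [hu] at h₁
  linarith [h₁.unique h₂]

/-- **Abelian property** of the truncated α-stable divisible sandpile: the limiting
configuration and odometer do not depend on the legal toppling scheme. -/
theorem sandpile_abelian
    (α r M : ℝ) (hα : α ∈ Set.Ioo (1 : ℝ) 2) (hr : 0 < r) (hrM : r < M)
    (hk : 0 < kn α r M 1)
    (ρ : ℤ × ℤ → ℝ) (hρ0 : ∀ x, 0 ≤ ρ x) (hρfin : (Function.support ρ).Finite)
    (T₁ T₂ : ℕ → ℤ × ℤ) (hT₁ : LegalScheme α r M ρ T₁) (hT₂ : LegalScheme α r M ρ T₂)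
    (ν₁ u₁ ν₂ u₂ : ℤ × ℤ → ℝ)
    (hν₁ : ∀ x, Tendsto (fun k => conf α r M ρ T₁ k x) atTop (𝓝 (ν₁ x)))
    (hu₁ : ∀ x, Tendsto (fun k => emitted α r M ρ T₁ k x) atTop (𝓝 (u₁ x)))
    (hν₂ : ∀ x, Tendsto (fun k => conf α r M ρ T₂ k x) atTop (𝓝 (ν₂ x)))
    (hu₂ : ∀ x, Tendsto (fun k => emitted α r M ρ T₂ k x) atTop (𝓝 (u₂ x))) :
    ν₁ = ν₂ ∧ u₁ = u₂ :=
  sandpile_abelian_general α r M hk ρ T₁ T₂ hT₁ hT₂ ν₁ u₁ ν₂ u₂ hν₁ hu₁ hν₂ hu₂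

end TruncatedSandpile
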